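/- arXiv:2601.21297 — 7 statements merged into one kernel-verified Lean document; each statement's English description precedes it below -/
import Mathlib

section
/- Let X and U be nonempty types, let δt > 0 and λ > 0, and set γ := e^(−λ·δt), so that 0 < γ < 1. Let c, r : X × U → ℝ and V : X → ℝ be bounded functions and let σ : X × U → X be a transition map. For a bounded function W : X × U → ℝ define the derivative Bellman operator T_dv[W](x,u) := ( min{ c(x,u), r(x,u) + γ·V(σ(x,u)) + δt·γ·sup_{u' ∈ U} W(σ(x,u), u') } − V(x) ) / δt. Then for any two bounded functions W₁, W₂ : X × U → ℝ one has sup_{(x,u) ∈ X×U} |T_dv[W₁](x,u) − T_dv[W₂](x,u)| ≤ γ · sup_{(x,u) ∈ X×U} |W₁(x,u) − W₂(x,u)|, i.e. T_dv is a γ-contraction in the supremum norm (Theorem: e^(−λ·δt)-contraction on the derivatives). -/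
/-- **e^(−λ·δt)-contraction on the derivatives.**
For nonempty `X`, `U`, `δt > 0`, `λ > 0` and `γ = exp (−λ·δt)`, given bounded
`c r : X × U → ℝ`, a bounded frozen value `V : X → ℝ` and a transition map `σ`,
the derivative Bellman operator
`T_dv[W](x,u) = (min {c(x,u), r(x,u) + γ·V(σ(x,u)) + δt·γ·sup_{u'} W(σ(x,u),u')} − V(x)) / δt`
satisfies `‖T_dv[W₁] − T_dv[W₂]‖_∞ ≤ γ · ‖W₁ − W₂‖_∞` for all bounded `W₁ W₂`. -/
theorem derivative_bellman_contraction {X U : Type*} [Nonempty X] [Nonempty U]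
    (δt lam : ℝ) (hδt : 0 < δt) (hlam : 0 < lam)
    (γ : ℝ) (hγ : γ = Real.exp (-(lam * δt)))
    (c r : X × U → ℝ) (V : X → ℝ) (σ : X × U → X)
    (hc : ∃ M, ∀ p, |c p| ≤ M)
    (hr : ∃ M, ∀ p, |r p| ≤ M)
    (hV : ∃ M, ∀ x, |V x| ≤ M)
    (Tdv : (X × U → ℝ) → X × U → ℝ)
    (hTdv : ∀ (W : X × U → ℝ) (p : X × U),
      Tdv W p = (min (c p)
        (r p + γ * V (σ p) + δt * γ * ⨆ u' : U, W (σ p, u')) - V p.1) / δt)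
    (W₁ W₂ : X × U → ℝ)
    (hW₁ : ∃ M, ∀ p, |W₁ p| ≤ M) (hW₂ : ∃ M, ∀ p, |W₂ p| ≤ M) :
    (⨆ p : X × U, |Tdv W₁ p - Tdv W₂ p|) ≤ γ * ⨆ p : X × U, |W₁ p - W₂ p| := by
  obtain ⟨M₁, hM₁⟩ := hW₁
  obtain ⟨M₂, hM₂⟩ := hW₂
  have hγpos : 0 < γ := hγ ▸ Real.exp_pos _
  set K : ℝ := ⨆ p : X × U, |W₁ p - W₂ p| with hK
  have hbdd : BddAbove (Set.range fun p : X × U => |W₁ p - W₂ p|) := by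
    refine ⟨M₁ + M₂, ?_⟩
    rintro _ ⟨p, rfl⟩
    calc |W₁ p - W₂ p| ≤ |W₁ p| + |W₂ p| := abs_sub _ _
      _ ≤ M₁ + M₂ := add_le_add (hM₁ p) (hM₂ p)
  have hKle : ∀ p : X × U, |W₁ p - W₂ p| ≤ K := fun p => le_ciSup hbdd p
  have hK0 : 0 ≤ K := le_trans (abs_nonneg _) (hKle (Classical.arbitrary _))
  refine ciSup_le fun p => ?_
  -- bound the difference of the inner sups
  have hb1 : BddAbove (Set.range fun u' : U => W₁ (σ p, u')) :=
    ⟨M₁, by rintro _ ⟨u', rfl⟩; exact (abs_le.mp (hM₁ _)).2⟩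
  have hb2 : BddAbove (Set.range fun u' : U => W₂ (σ p, u')) :=
    ⟨M₂, by rintro _ ⟨u', rfl⟩; exact (abs_le.mp (hM₂ _)).2⟩
  have hsup : |(⨆ u' : U, W₁ (σ p, u')) - ⨆ u' : U, W₂ (σ p, u')| ≤ K := by
    rw [abs_sub_le_iff]
    constructor
    · rw [sub_le_iff_le_add]
      refine ciSup_le fun u' => ?_
      have : W₁ (σ p, u') ≤ W₂ (σ p, u') + K := by
        have := (abs_le.mp (hKle (σ p, u'))).2
        linarith [this]
      exact this.trans (by have := le_ciSup hb2 u'; linarith)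
    · rw [sub_le_iff_le_add]
      refine ciSup_le fun u' => ?_
      have : W₂ (σ p, u') ≤ W₁ (σ p, u') + K := by
        have := (abs_le.mp (hKle (σ p, u'))).1
        linarith [this]
      exact this.trans (by have := le_ciSup hb1 u'; linarith)
  rw [hTdv W₁ p, hTdv W₂ p]
  rw [div_sub_div_same, sub_sub_sub_cancel_right, abs_div, abs_of_pos hδt,
    div_le_iff₀ hδt]
  have hmin : |min (c p) (r p + γ * V (σ p) + δt * γ * ⨆ u' : U, W₁ (σ p, u')) -
      min (c p) (r p + γ * V (σ p) + δt * γ * ⨆ u' : U, W₂ (σ p, u'))| ≤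
      |(r p + γ * V (σ p) + δt * γ * ⨆ u' : U, W₁ (σ p, u')) -
       (r p + γ * V (σ p) + δt * γ * ⨆ u' : U, W₂ (σ p, u'))| := by
    refine (abs_min_sub_min_le_max _ _ _ _).trans ?_
    simp
  refine hmin.trans ?_
  have : (r p + γ * V (σ p) + δt * γ * ⨆ u' : U, W₁ (σ p, u')) -
      (r p + γ * V (σ p) + δt * γ * ⨆ u' : U, W₂ (σ p, u')) =
      δt * γ * ((⨆ u' : U, W₁ (σ p, u')) - ⨆ u' : U, W₂ (σ p, u')) := by ring
  rw [this, abs_mul, abs_of_pos (by positivity : (0:ℝ) < δt * γ)]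
  calc δt * γ * |(⨆ u' : U, W₁ (σ p, u')) - ⨆ u' : U, W₂ (σ p, u')|
      ≤ δt * γ * K := by
        exact mul_le_mul_of_nonneg_left hsup (by positivity)
    _ = γ * K * δt := by ring
end

section
/- Let X and U be nonempty types, let δt > 0 and λ > 0, and set γ := e^(−λ·δt), so that 0 < γ < 1. Let c, r : X × U → ℝ and V : X → ℝ be bounded functions and let σ : X × U → X. Define T_dv[W](x,u) := ( min{ c(x,u), r(x,u) + γ·V(σ(x,u)) + δt·γ·sup_{u' ∈ U} W(σ(x,u), u') } − V(x) ) / δt for bounded W : X × U → ℝ. Then T_dv maps the complete metric space of bounded real-valued functions on X × U (with the supremum metric) into itself, is Lipschitz with constant γ on this space, and hence has a unique bounded fixed point W*; moreover for any bounded W₀, the iterates satisfy ‖T_dv^n[W₀] − W*‖_∞ ≤ γⁿ·‖W₀ − W*‖_∞ for all n, so repeated application of T_dv converges uniformly to W*. -/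
/-! Perturbing `W` by at most `D` in the sup metric moves each inner supremum `⨆ u', W (σ p, u')`
by at most `D`; since `min (c p) ·` is `1`-Lipschitz, the numerator of `T_dv W p` then moves by at
most `δt·γ·D`, so `T_dv W p` moves by at most `γ·D`. On the complete space `ℓ^∞(X × U, ℝ)` the
operator is therefore a `γ`-contraction, and Banach's fixed-point theorem gives the rest. -/

open Filter Set Function Topology

open scoped ENNReal lp

section BoundedFunctions

variable {ι : Type*}

theorem memℓp_infty_of_abs_le {f : ι → ℝ} (hf : ∃ M, ∀ i, |f i| ≤ M) :
    Memℓp f ∞ := by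
  obtain ⟨M, hM⟩ := hf
  exact memℓp_infty_iff.2 ⟨M, forall_mem_range.2 hM⟩

namespace lp

theorem exists_abs_le (f : ℓ^∞(ι, ℝ)) : ∃ M, ∀ i, |f i| ≤ M :=
  ⟨‖f‖, norm_apply_le_norm ENNReal.top_ne_zero f⟩

theorem abs_sub_le_dist (f g : ℓ^∞(ι, ℝ)) (i : ι) : |f i - g i| ≤ dist f g := by
  rw [dist_eq_norm, ← Real.norm_eq_abs]
  exact norm_apply_le_norm ENNReal.top_ne_zero (f - g) i

theorem dist_eq_iSup_abs_sub (f g : ℓ^∞(ι, ℝ)) : dist f g = ⨆ i, |f i - g i| := by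
  simp only [dist_eq_norm, norm_eq_ciSup, coeFn_sub, Pi.sub_apply, Real.norm_eq_abs]

theorem tendstoUniformly_of_tendsto {α : Type*} {l : Filter α} {F : α → ℓ^∞(ι, ℝ)}
    {f : ℓ^∞(ι, ℝ)} (h : Tendsto F l (𝓝 f)) :
    TendstoUniformly (fun a => ⇑(F a)) f l := by
  refine Metric.tendstoUniformly_iff.2 fun ε hε => ?_
  filter_upwards [Metric.tendsto_nhds.1 h ε hε] with a ha i
  rw [dist_comm]
  exact (abs_sub_le_dist (F a) f i).trans_lt ha

end lp

theorem iSup_abs_sub_le_mul {T : (ι → ℝ) → ι → ℝ} {K : ℝ} (hK₀ : 0 ≤ K)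
    (hT_lip : ∀ f g, (∃ M, ∀ i, |f i| ≤ M) → (∃ M, ∀ i, |g i| ≤ M) →
      ∀ D, (∀ i, |f i - g i| ≤ D) → ∀ i, |T f i - T g i| ≤ K * D)
    {f g : ι → ℝ} (hf : ∃ M, ∀ i, |f i| ≤ M) (hg : ∃ M, ∀ i, |g i| ≤ M) :
    (⨆ i, |T f i - T g i|) ≤ K * ⨆ i, |f i - g i| := by
  obtain ⟨Mf, hMf⟩ := hf
  obtain ⟨Mg, hMg⟩ := hg
  have hfg : BddAbove (range fun i => |f i - g i|) :=
    ⟨Mf + Mg, forall_mem_range.2 fun i => (abs_sub _ _).trans (add_le_add (hMf i) (hMg i))⟩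
  exact Real.iSup_le (hT_lip f g ⟨Mf, hMf⟩ ⟨Mg, hMg⟩ _ (le_ciSup hfg))
    (mul_nonneg hK₀ (Real.iSup_nonneg fun _ => abs_nonneg _))

theorem exists_unique_bounded_fixedPoint {T : (ι → ℝ) → ι → ℝ} {K : ℝ}
    (hK₀ : 0 ≤ K) (hK₁ : K < 1)
    (hT_bdd : ∀ f, (∃ M, ∀ i, |f i| ≤ M) → ∃ M, ∀ i, |T f i| ≤ M)
    (hT_lip : ∀ f g, (∃ M, ∀ i, |f i| ≤ M) → (∃ M, ∀ i, |g i| ≤ M) →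
      ∀ D, (∀ i, |f i - g i| ≤ D) → ∀ i, |T f i - T g i| ≤ K * D) :
    ∃ fstar : ι → ℝ, (∃ M, ∀ i, |fstar i| ≤ M) ∧ T fstar = fstar ∧
      (∀ f : ι → ℝ, (∃ M, ∀ i, |f i| ≤ M) → T f = f → f = fstar) ∧
      (∀ f₀ : ι → ℝ, (∃ M, ∀ i, |f₀ i| ≤ M) → ∀ n : ℕ,
        (⨆ i, |T^[n] f₀ i - fstar i|) ≤ K ^ n * ⨆ i, |f₀ i - fstar i|) ∧
      (∀ f₀ : ι → ℝ, (∃ M, ∀ i, |f₀ i| ≤ M) →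
        TendstoUniformly (fun n : ℕ => T^[n] f₀) fstar atTop) := by
  let lift (f : ι → ℝ) (hf : ∃ M, ∀ i, |f i| ≤ M) : ℓ^∞(ι, ℝ) := ⟨f, memℓp_infty_of_abs_le hf⟩
  let F (f : ℓ^∞(ι, ℝ)) : ℓ^∞(ι, ℝ) := lift (T f) (hT_bdd f (lp.exists_abs_le f))
  have hF : Semiconj (fun f : ℓ^∞(ι, ℝ) => ⇑f) F T := fun _ => rfl
  have hF_contr : ContractingWith ⟨K, hK₀⟩ F := by
    refine ⟨mod_cast hK₁, LipschitzWith.of_dist_le_mul fun f g => ?_⟩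
    rw [dist_eq_norm]
    refine lp.norm_le_of_forall_le (by positivity) fun i => ?_
    exact hT_lip f g (lp.exists_abs_le f) (lp.exists_abs_le g) _ (lp.abs_sub_le_dist f g) i
  set w := ContractingWith.fixedPoint F hF_contr
  have hw : IsFixedPt F w := hF_contr.fixedPoint_isFixedPt
  have hiter (f₀ : ι → ℝ) (hf₀ : ∃ M, ∀ i, |f₀ i| ≤ M) (n : ℕ) :
      ⇑(F^[n] (lift f₀ hf₀)) = T^[n] f₀ :=
    hF.iterate_right n (lift f₀ hf₀)
  refine ⟨w, lp.exists_abs_le w, congrArg Subtype.val hw, fun f hf hfix => ?_,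
    fun f₀ hf₀ n => ?_, fun f₀ hf₀ => ?_⟩
  · exact congrArg Subtype.val (hF_contr.fixedPoint_unique (x := lift f hf) (Subtype.ext hfix))
  · calc ⨆ i, |T^[n] f₀ i - w i| = dist (F^[n] (lift f₀ hf₀)) (F^[n] w) := by
          rw [(hw.iterate n).eq, lp.dist_eq_iSup_abs_sub, hiter f₀ hf₀]
      _ ≤ K ^ n * dist (lift f₀ hf₀) w :=
          mod_cast (hF_contr.toLipschitzWith.iterate n).dist_le_mul _ _
      _ = K ^ n * ⨆ i, |f₀ i - w i| := by rw [lp.dist_eq_iSup_abs_sub]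
  · simpa only [hiter] using
      lp.tendstoUniformly_of_tendsto (hF_contr.tendsto_iterate_fixedPoint (lift f₀ hf₀))

end BoundedFunctions

section Supremum

variable {U : Type*} [Nonempty U] {f g : U → ℝ}

theorem abs_ciSup_le {M : ℝ} (hf : ∀ u, |f u| ≤ M) : |⨆ u, f u| ≤ M := by
  have hbdd : BddAbove (range f) := ⟨M, forall_mem_range.2 fun u => (abs_le.1 (hf u)).2⟩
  let u₀ := Classical.arbitrary U
  exact abs_le.2 ⟨(abs_le.1 (hf u₀)).1.trans (le_ciSup hbdd u₀),
    ciSup_le fun u => (abs_le.1 (hf u)).2⟩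

theorem ciSup_le_ciSup_add {D : ℝ} (hg : BddAbove (range g)) (h : ∀ u, f u ≤ g u + D) :
    ⨆ u, f u ≤ (⨆ u, g u) + D :=
  ciSup_le fun u => (h u).trans (by gcongr; exact le_ciSup hg u)

theorem abs_ciSup_sub_ciSup_le {D : ℝ} (hf : BddAbove (range f)) (hg : BddAbove (range g))
    (h : ∀ u, |f u - g u| ≤ D) : |(⨆ u, f u) - ⨆ u, g u| ≤ D := by
  refine abs_sub_le_iff.2 ⟨?_, ?_⟩ <;> rw [sub_le_iff_le_add']
  · exact ciSup_le_ciSup_add hg fun u => by linarith [(abs_sub_le_iff.1 (h u)).1]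
  · exact ciSup_le_ciSup_add hf fun u => by linarith [(abs_sub_le_iff.1 (h u)).2]

end Supremum

section DerivativeBellman

variable {X U : Type*}

noncomputable def derivBellman (δt γ : ℝ) (c r : X × U → ℝ) (V : X → ℝ) (σ : X × U → X)
    (W : X × U → ℝ) (p : X × U) : ℝ :=
  (min (c p) (r p + γ * V (σ p) + δt * γ * ⨆ u' : U, W (σ p, u')) - V p.1) / δt

variable {δt γ : ℝ} {c r : X × U → ℝ} {V : X → ℝ} {σ : X × U → X}

theorem derivBellman_bounded (hc : ∃ M, ∀ p, |c p| ≤ M) (hr : ∃ M, ∀ p, |r p| ≤ M)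
    (hV : ∃ M, ∀ x, |V x| ≤ M) {W : X × U → ℝ} (hW : ∃ M, ∀ p, |W p| ≤ M) :
    ∃ M, ∀ p, |derivBellman δt γ c r V σ W p| ≤ M := by
  obtain ⟨Mc, hMc⟩ := hc
  obtain ⟨Mr, hMr⟩ := hr
  obtain ⟨MV, hMV⟩ := hV
  obtain ⟨MW, hMW⟩ := hW
  refine ⟨(Mc + (Mr + |γ| * MV + |δt| * |γ| * MW) + MV) / |δt|, fun p => ?_⟩
  have : Nonempty U := ⟨p.2⟩
  have hS : |⨆ u', W (σ p, u')| ≤ MW := abs_ciSup_le fun u' => hMW _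
  have hmin (a b : ℝ) : |min a b| ≤ |a| + |b| :=
    abs_min_le_max_abs_abs.trans (max_le_add_of_nonneg (abs_nonneg a) (abs_nonneg b))
  rw [derivBellman, abs_div]
  gcongr
  calc _ ≤ |c p| + (|r p| + |γ| * |V (σ p)| + |δt| * |γ| * |⨆ u', W (σ p, u')|) + |V p.1| := by
        grw [abs_sub, hmin, abs_add_three, abs_mul, abs_mul, abs_mul]
    _ ≤ _ := by gcongr <;> first | exact hMc p | exact hMr p | exact hMV _

theorem abs_derivBellman_sub_le (hγ : 0 ≤ γ) {W₁ W₂ : X × U → ℝ}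
    (hW₁ : ∃ M, ∀ p, |W₁ p| ≤ M) (hW₂ : ∃ M, ∀ p, |W₂ p| ≤ M) {D : ℝ}
    (hD : ∀ p, |W₁ p - W₂ p| ≤ D) (p : X × U) :
    |derivBellman δt γ c r V σ W₁ p - derivBellman δt γ c r V σ W₂ p| ≤ γ * D := by
  have : Nonempty U := ⟨p.2⟩
  have hbdd {W : X × U → ℝ} (hW : ∃ M, ∀ p, |W p| ≤ M) :
      BddAbove (range fun u' => W (σ p, u')) := by
    obtain ⟨M, hM⟩ := hW
    exact ⟨M, forall_mem_range.2 fun u' => (abs_le.1 (hM _)).2⟩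
  set S₁ := ⨆ u', W₁ (σ p, u')
  set S₂ := ⨆ u', W₂ (σ p, u')
  have hS : |S₁ - S₂| ≤ D := abs_ciSup_sub_ciSup_le (hbdd hW₁) (hbdd hW₂) fun u' => hD _
  have hmin (a b b' : ℝ) : |min a b - min a b'| ≤ |b - b'| := by
    simpa using abs_min_sub_min_le_max a b a b'
  rw [derivBellman, derivBellman, div_sub_div_same, sub_sub_sub_cancel_right, abs_div]
  calc _ ≤ |δt| * (γ * |S₁ - S₂|) / |δt| := by
        gcongr
        refine (hmin (c p) _ _).trans_eq ?_
        rw [add_sub_add_left_eq_sub, ← mul_sub, abs_mul, abs_mul, abs_of_nonneg hγ, mul_assoc]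
    _ ≤ γ * |S₁ - S₂| := by
        rcases eq_or_ne δt 0 with rfl | hδt
        · simpa using mul_nonneg hγ (abs_nonneg _)
        · rw [mul_div_cancel_left₀ _ (abs_ne_zero.2 hδt)]
    _ ≤ γ * D := by gcongr

end DerivativeBellman

theorem derivative_bellman_fixed_point_general {X U : Type*}
    (δt lam : ℝ) (hδt : 0 < δt) (hlam : 0 < lam)
    (γ : ℝ) (hγ : γ = Real.exp (-(lam * δt)))
    (c r : X × U → ℝ) (V : X → ℝ) (σ : X × U → X)
    (hc : ∃ M, ∀ p, |c p| ≤ M)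
    (hr : ∃ M, ∀ p, |r p| ≤ M)
    (hV : ∃ M, ∀ x, |V x| ≤ M)
    (Tdv : (X × U → ℝ) → X × U → ℝ)
    (hTdv : ∀ (W : X × U → ℝ) (p : X × U),
      Tdv W p = (min (c p)
        (r p + γ * V (σ p) + δt * γ * ⨆ u' : U, W (σ p, u')) - V p.1) / δt) :
    -- T_dv maps bounded functions to bounded functions
    (∀ W : X × U → ℝ, (∃ M, ∀ p, |W p| ≤ M) → ∃ M, ∀ p, |Tdv W p| ≤ M) ∧
    -- T_dv is Lipschitz with constant γ in the supremum metric
    (∀ W₁ W₂ : X × U → ℝ, (∃ M, ∀ p, |W₁ p| ≤ M) → (∃ M, ∀ p, |W₂ p| ≤ M) →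
      (⨆ p : X × U, |Tdv W₁ p - Tdv W₂ p|) ≤ γ * ⨆ p : X × U, |W₁ p - W₂ p|) ∧
    -- unique bounded fixed point and geometric convergence of the iterates
    (∃ Wstar : X × U → ℝ, (∃ M, ∀ p, |Wstar p| ≤ M) ∧ Tdv Wstar = Wstar ∧
      (∀ W : X × U → ℝ, (∃ M, ∀ p, |W p| ≤ M) → Tdv W = W → W = Wstar) ∧
      (∀ W₀ : X × U → ℝ, (∃ M, ∀ p, |W₀ p| ≤ M) → ∀ n : ℕ,
        (⨆ p : X × U, |Tdv^[n] W₀ p - Wstar p|) ≤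
          γ ^ n * ⨆ p : X × U, |W₀ p - Wstar p|) ∧
      (∀ W₀ : X × U → ℝ, (∃ M, ∀ p, |W₀ p| ≤ M) →
        TendstoUniformly (fun n : ℕ => Tdv^[n] W₀) Wstar Filter.atTop)) := by
  have hγ₀ : 0 ≤ γ := hγ ▸ (Real.exp_pos _).le
  have hγ₁ : γ < 1 := hγ ▸ Real.exp_lt_one_iff.2 (neg_neg_of_pos (mul_pos hlam hδt))
  obtain rfl : Tdv = derivBellman δt γ c r V σ := funext fun W => funext (hTdv W)
  have hbdd W := derivBellman_bounded (δt := δt) (γ := γ) (σ := σ) (W := W) hc hr hV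
  have hlip := fun W₁ W₂ hW₁ hW₂ D ↦ abs_derivBellman_sub_le (δt := δt) (c := c) (r := r)
    (V := V) (σ := σ) (W₁ := W₁) (W₂ := W₂) (D := D) hγ₀ hW₁ hW₂
  exact ⟨hbdd, fun _ _ => iSup_abs_sub_le_mul hγ₀ hlip,
    exists_unique_bounded_fixedPoint hγ₀ hγ₁ hbdd hlip⟩

/-- **Fixed point of the derivative Bellman operator.**
For nonempty `X`, `U`, `δt > 0`, `λ > 0`, `γ = exp (−λ·δt)`, bounded `c r : X × U → ℝ`,
bounded frozen value `V : X → ℝ` and transition map `σ`, the operator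
`T_dv[W](x,u) = (min {c(x,u), r(x,u) + γ·V(σ(x,u)) + δt·γ·sup_{u'} W(σ(x,u),u')} − V(x))/δt`
maps bounded functions on `X × U` to bounded functions, is `γ`-Lipschitz in the
supremum metric, and hence has a unique bounded fixed point `W*`; moreover the
iterates from any bounded `W₀` satisfy `‖T_dv^n[W₀] − W*‖_∞ ≤ γⁿ·‖W₀ − W*‖_∞`,
hence converge uniformly to `W*`. -/
theorem derivative_bellman_fixed_point {X U : Type*} [Nonempty X] [Nonempty U]
    (δt lam : ℝ) (hδt : 0 < δt) (hlam : 0 < lam)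
    (γ : ℝ) (hγ : γ = Real.exp (-(lam * δt)))
    (c r : X × U → ℝ) (V : X → ℝ) (σ : X × U → X)
    (hc : ∃ M, ∀ p, |c p| ≤ M)
    (hr : ∃ M, ∀ p, |r p| ≤ M)
    (hV : ∃ M, ∀ x, |V x| ≤ M)
    (Tdv : (X × U → ℝ) → X × U → ℝ)
    (hTdv : ∀ (W : X × U → ℝ) (p : X × U),
      Tdv W p = (min (c p)
        (r p + γ * V (σ p) + δt * γ * ⨆ u' : U, W (σ p, u')) - V p.1) / δt) :
    -- T_dv maps bounded functions to bounded functions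
    (∀ W : X × U → ℝ, (∃ M, ∀ p, |W p| ≤ M) → ∃ M, ∀ p, |Tdv W p| ≤ M) ∧
    -- T_dv is Lipschitz with constant γ in the supremum metric
    (∀ W₁ W₂ : X × U → ℝ, (∃ M, ∀ p, |W₁ p| ≤ M) → (∃ M, ∀ p, |W₂ p| ≤ M) →
      (⨆ p : X × U, |Tdv W₁ p - Tdv W₂ p|) ≤ γ * ⨆ p : X × U, |W₁ p - W₂ p|) ∧
    -- unique bounded fixed point and geometric convergence of the iterates
    (∃ Wstar : X × U → ℝ, (∃ M, ∀ p, |Wstar p| ≤ M) ∧ Tdv Wstar = Wstar ∧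
      (∀ W : X × U → ℝ, (∃ M, ∀ p, |W p| ≤ M) → Tdv W = W → W = Wstar) ∧
      (∀ W₀ : X × U → ℝ, (∃ M, ∀ p, |W₀ p| ≤ M) → ∀ n : ℕ,
        (⨆ p : X × U, |Tdv^[n] W₀ p - Wstar p|) ≤
          γ ^ n * ⨆ p : X × U, |W₀ p - Wstar p|) ∧
      (∀ W₀ : X × U → ℝ, (∃ M, ∀ p, |W₀ p| ≤ M) →
        TendstoUniformly (fun n : ℕ => Tdv^[n] W₀) Wstar Filter.atTop)) :=
  derivative_bellman_fixed_point_general δt lam hδt hlam γ hγ c r V σ hc hr hV Tdv hTdv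
end

section
/- Let λ ≥ 0 and let φ : [0,∞) → ℝ be bounded and continuous. Define J_λ(t) := ∫₀ᵗ λ·e^(−λτ)·φ(τ) dτ + e^(−λt)·φ(t). Then inf_{t ≥ 0} J_λ(t) ≥ inf_{t ≥ 0} φ(t); that is, along any fixed trajectory the discounted safety value dominates the undiscounted safety value. -/
/-!
The weights `λ e^{-λτ} dτ` on `[0, t]` together with the mass `e^{-λt}` at `t` have total mass
`(1 - e^{-λt}) + e^{-λt} = 1`, so `J_λ(t)` is an average of values of `φ` on `[0, t]` and hence
at least their infimum.
-/

open Real intervalIntegral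

theorem integral_mul_exp_neg_mul (lam a b : ℝ) :
    ∫ τ in a..b, lam * exp (-(lam * τ)) = exp (-(lam * a)) - exp (-(lam * b)) := by
  have hderiv : ∀ τ ∈ Set.uIcc a b,
      HasDerivAt (fun τ => -exp (-(lam * τ))) (lam * exp (-(lam * τ))) τ := fun τ _ =>
    (((hasDerivAt_id τ).const_mul lam).neg.exp).neg.congr_deriv (by simp [mul_comm])
  rw [integral_eq_sub_of_hasDerivAt hderiv
    ((by fun_prop : Continuous fun τ => lam * exp (-(lam * τ))).intervalIntegrable _ _)]
  ring

theorem le_integral_mul_exp_neg_mul_add {lam t m : ℝ} {φ : ℝ → ℝ} (hlam : 0 ≤ lam) (ht : 0 ≤ t)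
    (hφ : IntervalIntegrable φ MeasureTheory.volume 0 t) (hm : ∀ τ ∈ Set.Icc 0 t, m ≤ φ τ) :
    m ≤ (∫ τ in (0:ℝ)..t, lam * exp (-(lam * τ)) * φ τ) + exp (-(lam * t)) * φ t := by
  have hweight : Continuous fun τ => lam * exp (-(lam * τ)) := by fun_prop
  have hintegral : ∫ τ in (0:ℝ)..t, lam * exp (-(lam * τ)) * m
      ≤ ∫ τ in (0:ℝ)..t, lam * exp (-(lam * τ)) * φ τ :=
    integral_mono_on ht ((hweight.intervalIntegrable _ _).mul_const m)
      (hφ.continuousOn_mul hweight.continuousOn) fun τ hτ =>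
        mul_le_mul_of_nonneg_left (hm τ hτ) (by positivity)
  have hendpoint : exp (-(lam * t)) * m ≤ exp (-(lam * t)) * φ t :=
    mul_le_mul_of_nonneg_left (hm t ⟨ht, le_rfl⟩) (exp_pos _).le
  calc m = (∫ τ in (0:ℝ)..t, lam * exp (-(lam * τ)) * m) + exp (-(lam * t)) * m := by
        rw [integral_mul_const, integral_mul_exp_neg_mul]
        simp only [mul_zero, neg_zero, exp_zero]
        ring
    _ ≤ _ := add_le_add hintegral hendpoint

/-- **Discounted safety value dominates the undiscounted one along a trajectory.**
For `λ ≥ 0` and a bounded continuous constraint signal `φ` on `[0,∞)`, the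
discounted running cost `J_λ(t) = ∫₀ᵗ λ·e^(−λτ)·φ(τ) dτ + e^(−λt)·φ(t)` satisfies
`inf_{t ≥ 0} J_λ(t) ≥ inf_{t ≥ 0} φ(t)`. -/
theorem discounted_inf_ge_undiscounted_inf (lam : ℝ) (hlam : 0 ≤ lam)
    (φ : ℝ → ℝ) (hφb : ∃ M, ∀ t, 0 ≤ t → |φ t| ≤ M)
    (hφc : ContinuousOn φ (Set.Ici 0)) :
    (⨅ t : Set.Ici (0:ℝ), φ t) ≤
      ⨅ t : Set.Ici (0:ℝ),
        (∫ τ in (0:ℝ)..(t:ℝ), lam * Real.exp (-(lam * τ)) * φ τ)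
          + Real.exp (-(lam * (t:ℝ))) * φ t := by
  obtain ⟨M, hM⟩ := hφb
  have hbdd : BddBelow (Set.range fun t : Set.Ici (0:ℝ) => φ t) :=
    ⟨-M, by rintro _ ⟨⟨τ, hτ⟩, rfl⟩; exact neg_le_of_abs_le (hM τ hτ)⟩
  refine le_ciInf fun ⟨t, (ht : 0 ≤ t)⟩ => le_integral_mul_exp_neg_mul_add hlam ht ?_ ?_
  · exact (hφc.mono (Set.uIcc_of_le ht ▸ Set.Icc_subset_Ici_self)).intervalIntegrable
  · exact fun τ hτ => ciInf_le hbdd ⟨τ, hτ.1⟩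
end

section
/- Let φ : [0,∞) → ℝ be bounded and continuous, and for λ > 0 define J_λ(t) := ∫₀ᵗ λ·e^(−λτ)·φ(τ) dτ + e^(−λt)·φ(t). Then lim_{λ → 0⁺} inf_{t ≥ 0} J_λ(t) = inf_{t ≥ 0} φ(t). (This is the trajectory-wise form of the corollary that the discounted safety value V^λ converges to the undiscounted safety value V as the discount factor λ approaches zero.) -/
/-!
`J_λ(t)` is an average of `φ` over `[0, t]`: the density `λ e^(-λτ)` on `[0, t]` and the atom
`e^(-λt)` at `t` have total mass `1`. Hence `inf_t J_λ(t) ≥ inf φ` for every `λ > 0`. Conversely,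
for fixed `t` the integral term is `O(λ t)` while `e^(-λt) → 1`, so `J_λ(t) → φ(t)` as `λ → 0⁺`,
which bounds `limsup inf_t J_λ` by every value `φ(t)`.
-/

open Filter Set Topology Real

theorem tendsto_ciInf_of_tendsto_of_eventually_ciInf_le {α ι β : Type*} [Nonempty ι]
    [ConditionallyCompleteLinearOrder β] [TopologicalSpace β] [OrderTopology β]
    {l : Filter α} {f : α → ι → β} {g : ι → β}
    (hfg : ∀ i, Tendsto (f · i) l (𝓝 (g i))) (hle : ∀ᶠ x in l, ∀ i, ⨅ j, g j ≤ f x i) :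
    Tendsto (fun x => ⨅ i, f x i) l (𝓝 (⨅ i, g i)) := by
  refine tendsto_order.2 ⟨fun a ha => hle.mono fun x hx => ha.trans_le (le_ciInf hx),
    fun a ha => ?_⟩
  obtain ⟨i, hi⟩ := exists_lt_of_ciInf_lt ha
  filter_upwards [hle, (hfg i).eventually (gt_mem_nhds hi)] with x hx hxi
  exact (ciInf_le ⟨_, forall_mem_range.2 hx⟩ i).trans_lt hxi

noncomputable def discountedCost (φ : ℝ → ℝ) (lam t : ℝ) : ℝ :=
  (∫ τ in (0:ℝ)..t, lam * exp (-(lam * τ)) * φ τ) + exp (-(lam * t)) * φ t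

theorem integral_discount_weight (lam t : ℝ) :
    ∫ τ in (0:ℝ)..t, lam * exp (-(lam * τ)) = 1 - exp (-(lam * t)) := by
  have hderiv (τ : ℝ) :
      HasDerivAt (fun x => -exp (-(lam * x))) (lam * exp (-(lam * τ))) τ := by
    simpa [mul_comm lam] using (((hasDerivAt_id' τ).const_mul lam).fun_neg.exp).fun_neg
  rw [intervalIntegral.integral_eq_sub_of_hasDerivAt (fun τ _ => hderiv τ)
    ((by fun_prop : Continuous fun τ => lam * exp (-(lam * τ))).intervalIntegrable _ _)]
  simp only [mul_zero, neg_zero, exp_zero]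
  ring

theorem le_discountedCost {φ : ℝ → ℝ} {lam t m : ℝ} (hlam : 0 ≤ lam) (ht : 0 ≤ t)
    (hφ : IntervalIntegrable φ MeasureTheory.volume 0 t) (hm : ∀ τ ∈ Icc 0 t, m ≤ φ τ) :
    m ≤ discountedCost φ lam t := by
  have hweight : Continuous fun τ => lam * exp (-(lam * τ)) := by fun_prop
  have hint : ∫ τ in (0:ℝ)..t, lam * exp (-(lam * τ)) * m
      ≤ ∫ τ in (0:ℝ)..t, lam * exp (-(lam * τ)) * φ τ :=
    intervalIntegral.integral_mono_on ht (hweight.intervalIntegrable 0 t |>.mul_const m)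
      (hφ.continuousOn_mul hweight.continuousOn)
      fun τ hτ => mul_le_mul_of_nonneg_left (hm τ hτ) (by positivity)
  rw [intervalIntegral.integral_mul_const, integral_discount_weight] at hint
  calc m = (1 - exp (-(lam * t))) * m + exp (-(lam * t)) * m := by ring
    _ ≤ discountedCost φ lam t :=
      add_le_add hint (mul_le_mul_of_nonneg_left (hm t ⟨ht, le_rfl⟩) (exp_pos _).le)

theorem abs_integral_discount_le {φ : ℝ → ℝ} {lam t M : ℝ} (hlam : 0 ≤ lam) (ht : 0 ≤ t)
    (hM : ∀ τ ∈ Icc 0 t, |φ τ| ≤ M) :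
    |∫ τ in (0:ℝ)..t, lam * exp (-(lam * τ)) * φ τ| ≤ lam * M * t := by
  have hbound : ∀ τ ∈ uIoc (0:ℝ) t, ‖lam * exp (-(lam * τ)) * φ τ‖ ≤ lam * M := by
    intro τ hτ
    rw [uIoc_of_le ht] at hτ
    have hexp : exp (-(lam * τ)) ≤ 1 := exp_le_one_iff.2 (neg_nonpos.2 (by nlinarith [hτ.1]))
    calc ‖lam * exp (-(lam * τ)) * φ τ‖ = lam * exp (-(lam * τ)) * |φ τ| := by
          rw [Real.norm_eq_abs, abs_mul, abs_of_nonneg (by positivity)]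
      _ ≤ lam * 1 * M := by gcongr; exact hM τ (Ioc_subset_Icc_self hτ)
      _ = lam * M := by ring
  simpa [abs_of_nonneg ht] using intervalIntegral.norm_integral_le_of_norm_le_const hbound

theorem tendsto_discountedCost_nhdsGE_zero {φ : ℝ → ℝ} {t M : ℝ} (ht : 0 ≤ t)
    (hM : ∀ τ ∈ Icc 0 t, |φ τ| ≤ M) :
    Tendsto (fun lam => discountedCost φ lam t) (𝓝[≥] 0) (𝓝 (φ t)) := by
  have hint : Tendsto (fun lam => ∫ τ in (0:ℝ)..t, lam * exp (-(lam * τ)) * φ τ)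
      (𝓝[≥] 0) (𝓝 0) := by
    refine squeeze_zero_norm' ?_ (tendsto_nhdsWithin_of_tendsto_nhds
      ((by fun_prop : Continuous fun lam : ℝ => lam * M * t).tendsto' 0 0 (by simp)))
    filter_upwards [self_mem_nhdsWithin] with lam hlam
    exact abs_integral_discount_le hlam ht hM
  have hexp : Tendsto (fun lam => exp (-(lam * t)) * φ t) (𝓝[≥] 0) (𝓝 (φ t)) :=
    tendsto_nhdsWithin_of_tendsto_nhds
      ((by fun_prop : Continuous fun lam : ℝ => exp (-(lam * t)) * φ t).tendsto' 0 _ (by simp))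
  simpa only [discountedCost, zero_add] using hint.add hexp

/-- **Convergence of the discounted to the undiscounted safety value as λ → 0⁺.**
For a bounded continuous constraint signal `φ` on `[0,∞)` and the discounted running
cost `J_λ(t) = ∫₀ᵗ λ·e^(−λτ)·φ(τ) dτ + e^(−λt)·φ(t)`, we have
`lim_{λ → 0⁺} inf_{t ≥ 0} J_λ(t) = inf_{t ≥ 0} φ(t)`. -/
theorem discounted_inf_tendsto_undiscounted_inf
    (φ : ℝ → ℝ) (hφb : ∃ M, ∀ t, 0 ≤ t → |φ t| ≤ M)
    (hφc : ContinuousOn φ (Set.Ici 0)) :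
    Filter.Tendsto
      (fun lam : ℝ =>
        ⨅ t : Set.Ici (0:ℝ),
          (∫ τ in (0:ℝ)..(t:ℝ), lam * Real.exp (-(lam * τ)) * φ τ)
            + Real.exp (-(lam * (t:ℝ))) * φ t)
      (nhdsWithin 0 (Set.Ioi 0))
      (nhds (⨅ t : Set.Ici (0:ℝ), φ t)) := by
  obtain ⟨M, hM⟩ := hφb
  have hbdd : BddBelow (range fun t : Ici (0:ℝ) => φ t) :=
    ⟨-M, by rintro _ ⟨t, rfl⟩; linarith [(abs_le.1 (hM t t.2)).1]⟩
  refine tendsto_ciInf_of_tendsto_of_eventually_ciInf_le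
    (f := fun lam (t : Ici (0:ℝ)) => discountedCost φ lam t) (fun t => ?_) ?_
  · exact (tendsto_discountedCost_nhdsGE_zero t.2 fun τ hτ => hM τ hτ.1).mono_left
      (nhdsWithin_mono _ Ioi_subset_Ici_self)
  · filter_upwards [self_mem_nhdsWithin] with lam hlam t
    exact le_discountedCost hlam.le t.2
      ((hφc.mono Icc_subset_Ici_self).intervalIntegrable_of_Icc t.2)
      fun τ hτ => ciInf_le hbdd ⟨τ, hτ.1⟩
end

section
/- Let φ : [0,∞) → ℝ be continuous on some interval [0,ε] (ε > 0) and right-differentiable at 0 with right derivative φ'(0). Then lim_{s → 0⁺} ( inf_{t ∈ [0,s]} φ(t) − φ(0) ) / s = min{ 0, φ'(0) }. -/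
/-- **First-order expansion of the running minimum.**
Let `φ : [0,∞) → ℝ` be continuous on some `[0,ε]` (`ε > 0`) and right-differentiable
at `0` with right derivative `φ'(0)`. Then
`lim_{s → 0⁺} (inf_{t ∈ [0,s]} φ(t) − φ(0)) / s = min {0, φ'(0)}`. -/
theorem running_min_first_order (ε : ℝ) (hε : 0 < ε) (φ : ℝ → ℝ) (φ' : ℝ)
    (hφ : ContinuousOn φ (Set.Icc 0 ε))
    (hφ' : HasDerivWithinAt φ φ' (Set.Ici 0) 0) :
    Filter.Tendsto (fun s : ℝ => (sInf (φ '' Set.Icc 0 s) - φ 0) / s)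
      (nhdsWithin 0 (Set.Ioi 0)) (nhds (min 0 φ')) := by
  have hslope : Filter.Tendsto (fun t => (φ t - φ 0) / t)
      (nhdsWithin 0 (Set.Ioi 0)) (nhds φ') := by
    have h := (hasDerivWithinAt_iff_tendsto_slope).1 hφ'
    have heq : Set.Ici (0:ℝ) \ {0} = Set.Ioi 0 := by
      ext x; simp [Set.mem_diff, Set.mem_Ioi, lt_iff_le_and_ne, eq_comm]
    rw [heq] at h
    refine h.congr (fun t => ?_)
    simp [slope_def_field, div_eq_div_iff]
  rw [Metric.tendsto_nhdsWithin_nhds] at hslope ⊢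
  intro δ hδ
  obtain ⟨r0, hr0, h0⟩ := hslope (δ/2) (by linarith)
  refine ⟨min r0 ε, by positivity, ?_⟩
  intro s hs hdist
  simp only [Set.mem_Ioi] at hs
  rw [Real.dist_eq, sub_zero, abs_of_pos hs, lt_min_iff] at hdist
  obtain ⟨hsr0, hsε⟩ := hdist
  -- key pointwise estimate
  have key : ∀ t ∈ Set.Icc (0:ℝ) s, |φ t - φ 0 - φ' * t| ≤ δ/2 * t := by
    intro t ⟨ht0, hts⟩
    rcases eq_or_lt_of_le ht0 with rfl | ht0'
    · simp
    · have hd := h0 (Set.mem_Ioi.2 ht0') (by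
        rw [Real.dist_eq, sub_zero, abs_of_pos ht0']; linarith)
      rw [Real.dist_eq] at hd
      have : φ t - φ 0 - φ' * t = t * ((φ t - φ 0) / t - φ') := by
        field_simp
      rw [this, abs_mul, abs_of_pos ht0']
      nlinarith [le_of_lt hd]
  have hsub : Set.Icc (0:ℝ) s ⊆ Set.Icc 0 ε := Set.Icc_subset_Icc le_rfl (le_of_lt hsε)
  have hc : IsCompact (φ '' Set.Icc 0 s) :=
    (isCompact_Icc).image_of_continuousOn (hφ.mono hsub)
  have hmem0 : (0:ℝ) ∈ Set.Icc (0:ℝ) s := ⟨le_rfl, le_of_lt hs⟩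
  have hmems : s ∈ Set.Icc (0:ℝ) s := ⟨le_of_lt hs, le_rfl⟩
  have hne : (φ '' Set.Icc 0 s).Nonempty := ⟨φ 0, 0, hmem0, rfl⟩
  have hbdd := hc.bddBelow
  set m := sInf (φ '' Set.Icc 0 s) with hm
  -- lower bound
  have hlb : φ 0 + s * min 0 φ' - δ/2 * s ≤ m := by
    apply le_csInf hne
    rintro y ⟨t, ht, rfl⟩
    have hk := key t ht
    have habs := abs_le.1 hk
    have ht0 : 0 ≤ t := ht.1
    have hts : t ≤ s := ht.2
    have hmin : s * min 0 φ' ≤ φ' * t := by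
      rcases le_total φ' 0 with hneg | hpos
      · rw [min_eq_right hneg]; nlinarith
      · rw [min_eq_left hpos]; nlinarith
    nlinarith
  -- upper bounds
  have hub0 : m ≤ φ 0 := csInf_le hbdd ⟨0, hmem0, rfl⟩
  have hubs : m ≤ φ s := csInf_le hbdd ⟨s, hmems, rfl⟩
  have hks := abs_le.1 (key s hmems)
  rw [Real.dist_eq, abs_lt]
  constructor
  · have heq2 : (m - φ 0)/s - 0 ⊓ φ' = (m - φ 0 - (0 ⊓ φ')*s)/s := by
      field_simp
    rw [heq2, lt_div_iff₀ hs]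
    nlinarith
  · rw [sub_lt_iff_lt_add]
    rw [div_lt_iff₀ hs]
    rcases le_total φ' 0 with hneg | hpos
    · rw [min_eq_right hneg]; nlinarith
    · rw [min_eq_left hpos]; nlinarith
end

section
/- Let λ ≥ 0, let φ : [0,∞) → ℝ be continuous on some interval [0,ε] (ε > 0), and let ψ : [0,∞) → ℝ be continuous at 0 and right-differentiable at 0 with right derivative ψ'(0), and suppose ψ(0) < φ(0). Define J_λ(t) := ∫₀ᵗ λ·e^(−λτ)·φ(τ) dτ + e^(−λt)·φ(t) and Q^λ_s := min{ inf_{t ∈ [0,s]} J_λ(t), ∫₀ˢ λ·e^(−λτ)·φ(τ) dτ + e^(−λs)·ψ(s) }. Then lim_{s → 0⁺} ( Q^λ_s − ψ(0) ) / s = ψ'(0) + λ·(φ(0) − ψ(0)). -/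
/-!
Let `R_ψ(s) = ∫₀ˢ λ e^{-λτ} φ(τ) dτ + e^{-λs} ψ(s)` (`discountedPayoff λ φ ψ s`), so that `J = R_φ`
and `Q_s = min (inf_{[0,s]} J) (R_ψ s)`. Both `J` and `R_ψ` are right-continuous at `0`, with
`J 0 = φ 0 > ψ 0 = R_ψ 0`; hence for small `s > 0` the infimum of `J` over `[0, s]` stays above
`R_ψ s`, and `Q = R_ψ` near `0⁺`. The limit is then the right derivative of `R_ψ` at `0`, given by
the fundamental theorem of calculus and the product rule.
-/

open Set Filter Topology

noncomputable def discountedPayoff (lam : ℝ) (φ ψ : ℝ → ℝ) (s : ℝ) : ℝ :=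
  (∫ τ in (0:ℝ)..s, lam * Real.exp (-(lam * τ)) * φ τ) + Real.exp (-(lam * s)) * ψ s

theorem hasDerivWithinAt_integral_Ici_of_continuousOn {E : Type*} [NormedAddCommGroup E]
    [NormedSpace ℝ E] [CompleteSpace E] {f : ℝ → E} {a b : ℝ} (hab : a < b)
    (hf : ContinuousOn f (Icc a b)) :
    HasDerivWithinAt (fun s => ∫ τ in a..s, f τ) (f a) (Ici a) a := by
  have hIcc : Icc a b ∈ 𝓝[>] a := nhdsWithin_mono a Ioi_subset_Ici_self (Icc_mem_nhdsGE hab)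
  exact intervalIntegral.integral_hasDerivWithinAt_right IntervalIntegrable.refl
    ⟨Icc a b, hIcc, hf.aestronglyMeasurable measurableSet_Icc⟩
    ((hf a (left_mem_Icc.2 hab.le)).mono_of_mem_nhdsWithin hIcc)

theorem HasDerivWithinAt.tendsto_div_sub_nhdsGT {f : ℝ → ℝ} {f' a : ℝ}
    (hf : HasDerivWithinAt f f' (Ici a) a) :
    Tendsto (fun s => (f s - f a) / (s - a)) (𝓝[>] a) (𝓝 f') := by
  refine ((hasDerivWithinAt_iff_tendsto_slope' self_notMem_Ioi).1 hf.Ioi_of_Ici).congr fun s => ?_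
  rw [slope_def_field]

theorem eventually_le_sInf_image_Icc {J G : ℝ → ℝ} {a : ℝ} (hJ : ContinuousWithinAt J (Ici a) a)
    (hG : ContinuousWithinAt G (Ici a) a) (hGJ : G a < J a) :
    ∀ᶠ s in 𝓝[>] a, G s ≤ sInf (J '' Icc a s) := by
  obtain ⟨c, hGc, hcJ⟩ := exists_between hGJ
  obtain ⟨b, hab, hJb⟩ := mem_nhdsGE_iff_exists_Ico_subset.1 (hJ.eventually (lt_mem_nhds hcJ))
  filter_upwards [Ioo_mem_nhdsGT hab,
    nhdsWithin_mono a Ioi_subset_Ici_self (hG.eventually (gt_mem_nhds hGc))] with s hs hGs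
  refine hGs.le.trans (le_csInf ((nonempty_Icc.2 hs.1.le).image J) ?_)
  rintro _ ⟨t, ht, rfl⟩
  exact (hJb ⟨ht.1, ht.2.trans_lt hs.2⟩).le

section discountedPayoff

variable {lam ε : ℝ} {φ ψ : ℝ → ℝ}

theorem discountedPayoff_zero : discountedPayoff lam φ ψ 0 = ψ 0 := by
  simp [discountedPayoff]

theorem hasDerivWithinAt_discountedIntegral (hε : 0 < ε) (hφ : ContinuousOn φ (Icc 0 ε)) :
    HasDerivWithinAt (fun s => ∫ τ in (0:ℝ)..s, lam * Real.exp (-(lam * τ)) * φ τ)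
      (lam * φ 0) (Ici 0) 0 := by
  have hf : ContinuousOn (fun τ => lam * Real.exp (-(lam * τ)) * φ τ) (Icc 0 ε) :=
    (by fun_prop : Continuous fun τ : ℝ => lam * Real.exp (-(lam * τ))).continuousOn.mul hφ
  simpa using hasDerivWithinAt_integral_Ici_of_continuousOn hε hf

theorem hasDerivWithinAt_discountedPayoff {ψ' : ℝ} (hε : 0 < ε) (hφ : ContinuousOn φ (Icc 0 ε))
    (hψ : HasDerivWithinAt ψ ψ' (Ici 0) 0) :
    HasDerivWithinAt (discountedPayoff lam φ ψ) (ψ' + lam * (φ 0 - ψ 0)) (Ici 0) 0 := by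
  have hexp : HasDerivAt (fun s : ℝ => Real.exp (-(lam * s))) (-lam) 0 := by
    simpa using ((hasDerivAt_id (0:ℝ)).const_mul lam).neg.exp
  refine ((hasDerivWithinAt_discountedIntegral hε hφ).add
    (hexp.hasDerivWithinAt.mul hψ)).congr_deriv ?_
  simp only [neg_mul, mul_zero, neg_zero, Real.exp_zero, one_mul]
  ring

theorem continuousWithinAt_discountedPayoff (hε : 0 < ε) (hφ : ContinuousOn φ (Icc 0 ε))
    (hψ : ContinuousWithinAt ψ (Ici 0) 0) :
    ContinuousWithinAt (discountedPayoff lam φ ψ) (Ici 0) 0 :=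
  (hasDerivWithinAt_discountedIntegral hε hφ).continuousWithinAt.add
    ((by fun_prop : Continuous fun s : ℝ => Real.exp (-(lam * s))).continuousWithinAt.mul hψ)

end discountedPayoff

theorem advantage_limit_strict_case_general
    (lam ε : ℝ) (hε : 0 < ε)
    (φ ψ : ℝ → ℝ) (ψ' : ℝ)
    (hφ : ContinuousOn φ (Set.Icc 0 ε))
    (hψ : HasDerivWithinAt ψ ψ' (Set.Ici 0) 0)
    (h0 : ψ 0 < φ 0)
    (J : ℝ → ℝ)
    (hJ : ∀ t, J t = (∫ τ in (0:ℝ)..t, lam * Real.exp (-(lam * τ)) * φ τ)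
      + Real.exp (-(lam * t)) * φ t)
    (Q : ℝ → ℝ)
    (hQ : ∀ s, Q s = min (sInf (J '' Set.Icc 0 s))
      ((∫ τ in (0:ℝ)..s, lam * Real.exp (-(lam * τ)) * φ τ)
        + Real.exp (-(lam * s)) * ψ s)) :
    Filter.Tendsto (fun s : ℝ => (Q s - ψ 0) / s)
      (nhdsWithin 0 (Set.Ioi 0)) (nhds (ψ' + lam * (φ 0 - ψ 0))) := by
  obtain rfl : J = discountedPayoff lam φ φ := funext hJ
  have hG := hasDerivWithinAt_discountedPayoff (lam := lam) hε hφ hψ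
  have hJc : ContinuousWithinAt (discountedPayoff lam φ φ) (Ici 0) 0 :=
    continuousWithinAt_discountedPayoff hε hφ
      ((hφ 0 (left_mem_Icc.2 hε.le)).mono_of_mem_nhdsWithin (Icc_mem_nhdsGE hε))
  have hQG : ∀ᶠ s in 𝓝[>] 0, Q s = discountedPayoff lam φ ψ s := by
    filter_upwards [eventually_le_sInf_image_Icc hJc hG.continuousWithinAt
      (by simpa only [discountedPayoff_zero] using h0)] with s hs
    exact (hQ s).trans (min_eq_right hs)
  refine hG.tendsto_div_sub_nhdsGT.congr' ?_
  filter_upwards [hQG] with s hs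
  rw [hs, discountedPayoff_zero, sub_zero]

/-- **Advantage computation in the case V^λ(x) < c(x) (trajectory-wise form).**
Let `λ ≥ 0`, `φ : [0,∞) → ℝ` continuous on some `[0,ε]` (`ε > 0`), and
`ψ : [0,∞) → ℝ` continuous at `0` and right-differentiable at `0` with right
derivative `ψ'(0)`, with `ψ(0) < φ(0)`. With
`J_λ(t) = ∫₀ᵗ λ·e^(−λτ)·φ(τ) dτ + e^(−λt)·φ(t)` and
`Q^λ_s = min { inf_{t ∈ [0,s]} J_λ(t), ∫₀ˢ λ·e^(−λτ)·φ(τ) dτ + e^(−λs)·ψ(s) }`,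
we have `lim_{s → 0⁺} (Q^λ_s − ψ(0)) / s = ψ'(0) + λ·(φ(0) − ψ(0))`. -/
theorem advantage_limit_strict_case
    (lam ε : ℝ) (hlam : 0 ≤ lam) (hε : 0 < ε)
    (φ ψ : ℝ → ℝ) (ψ' : ℝ)
    (hφ : ContinuousOn φ (Set.Icc 0 ε))
    (hψ0 : ContinuousWithinAt ψ (Set.Ici 0) 0)
    (hψ : HasDerivWithinAt ψ ψ' (Set.Ici 0) 0)
    (h0 : ψ 0 < φ 0)
    (J : ℝ → ℝ)
    (hJ : ∀ t, J t = (∫ τ in (0:ℝ)..t, lam * Real.exp (-(lam * τ)) * φ τ)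
      + Real.exp (-(lam * t)) * φ t)
    (Q : ℝ → ℝ)
    (hQ : ∀ s, Q s = min (sInf (J '' Set.Icc 0 s))
      ((∫ τ in (0:ℝ)..s, lam * Real.exp (-(lam * τ)) * φ τ)
        + Real.exp (-(lam * s)) * ψ s)) :
    Filter.Tendsto (fun s : ℝ => (Q s - ψ 0) / s)
      (nhdsWithin 0 (Set.Ioi 0)) (nhds (ψ' + lam * (φ 0 - ψ 0))) :=
  advantage_limit_strict_case_general lam ε hε φ ψ ψ' hφ hψ h0 J hJ Q hQ
end

section
/- Let λ ≥ 0 and let φ, ψ : [0,∞) → ℝ be continuous on some interval [0,ε] (ε > 0) and right-differentiable at 0 with right derivatives φ'(0), ψ'(0); suppose ψ(t) ≤ φ(t) for all t ∈ [0,ε] and ψ(0) = φ(0). Define J_λ(t) := ∫₀ᵗ λ·e^(−λτ)·φ(τ) dτ + e^(−λt)·φ(t) and Q^λ_s := min{ inf_{t ∈ [0,s]} J_λ(t), ∫₀ˢ λ·e^(−λτ)·φ(τ) dτ + e^(−λs)·ψ(s) }. Then lim_{s → 0⁺} ( Q^λ_s − ψ(0) ) / s = min{ 0, ψ'(0) }.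 -/
/-!
Both entries of the minimum defining `Q^λ_s` equal `ψ 0` at `s = 0`. The second one has right
derivative `ψ'(0)` at `0`, and `J_λ` has right derivative `φ'(0)`: the discount factor contributes
`-λ φ(0)`, which the integral term cancels. If a function has right derivative `a` at `x`, its running infimum over `[x, s]` has right
derivative `min 0 a`. Since `ψ ≤ φ` with equality at `0`, `ψ'(0) ≤ φ'(0)`, so the limit is
`min (min 0 φ'(0)) ψ'(0) = min 0 ψ'(0)`.
-/

open Set Filter Topology

/-- With `ψ = φ` this is `J_λ`; in general it is the second entry of the minimum in `Q^λ_s`. -/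
noncomputable def discountedReturn (lam : ℝ) (φ ψ : ℝ → ℝ) (t : ℝ) : ℝ :=
  (∫ τ in (0:ℝ)..t, lam * Real.exp (-(lam * τ)) * φ τ) + Real.exp (-(lam * t)) * ψ t

lemma discountedReturn_zero (lam : ℝ) (φ ψ : ℝ → ℝ) :
    discountedReturn lam φ ψ 0 = ψ 0 := by
  simp [discountedReturn]

lemma hasDerivWithinAt_discountedReturn {lam ε ψ' : ℝ} {φ ψ : ℝ → ℝ} (hε : 0 < ε)
    (hφ : ContinuousOn φ (Icc 0 ε)) (hψ : HasDerivWithinAt ψ ψ' (Ici 0) 0)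
    (h0 : ψ 0 = φ 0) : HasDerivWithinAt (discountedReturn lam φ ψ) ψ' (Ici 0) 0 := by
  set g : ℝ → ℝ := fun τ => lam * Real.exp (-(lam * τ)) * φ τ
  have hg : ContinuousOn g (Icc 0 ε) := by fun_prop
  have hint : HasDerivWithinAt (fun t => ∫ τ in (0:ℝ)..t, g τ) (g 0) (Ici 0) 0 :=
    intervalIntegral.integral_hasDerivWithinAt_right (by simp)
      ⟨Icc 0 ε, Icc_mem_nhdsGT hε, hg.aestronglyMeasurable measurableSet_Icc⟩
      ((hg 0 ⟨le_rfl, hε.le⟩).mono_of_mem_nhdsWithin (Icc_mem_nhdsGT hε))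
  have hexp : HasDerivAt (fun t => Real.exp (-(lam * t))) (-lam) 0 := by
    simpa using ((hasDerivAt_id (0:ℝ)).const_mul lam).neg.exp
  exact (hint.add (hexp.hasDerivWithinAt.mul hψ)).congr_deriv (by simp [g, h0])

lemma HasDerivWithinAt.le_of_eventually_le {f g : ℝ → ℝ} {f' g' x : ℝ}
    (hf : HasDerivWithinAt f f' (Ici x) x) (hg : HasDerivWithinAt g g' (Ici x) x)
    (hle : ∀ᶠ t in 𝓝[>] x, f t ≤ g t) (hx : f x = g x) : f' ≤ g' := by
  rw [← hasDerivWithinAt_Ioi_iff_Ici,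
    hasDerivWithinAt_iff_tendsto_slope' (s := Ioi x) (lt_irrefl x)] at hf hg
  refine le_of_tendsto_of_tendsto hf hg ?_
  filter_upwards [hle, self_mem_nhdsWithin] with t ht (hxt : x < t)
  rw [slope_def_field, slope_def_field, hx]
  gcongr

lemma HasDerivWithinAt.eventually_forall_Icc_mul_lt_sub {f : ℝ → ℝ} {a b x : ℝ}
    (hf : HasDerivWithinAt f a (Ici x) x) (hb0 : b < 0) (hba : b < a) :
    ∀ᶠ s in 𝓝[>] x, ∀ t ∈ Icc x s, b * (s - x) < f t - f x := by
  rw [← hasDerivWithinAt_Ioi_iff_Ici,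
    hasDerivWithinAt_iff_tendsto_slope' (s := Ioi x) (lt_irrefl x)] at hf
  obtain ⟨u, hxu, hu⟩ := mem_nhdsGT_iff_exists_Ioo_subset.1 (hf.eventually (lt_mem_nhds hba))
  filter_upwards [Ioo_mem_nhdsGT hxu] with s hs t ht
  rcases ht.1.eq_or_lt with rfl | hxt
  · rw [sub_self]
    exact mul_neg_of_neg_of_pos hb0 (sub_pos.2 hs.1)
  · have hslope : b < slope f x t := hu ⟨hxt, ht.2.trans_lt hs.2⟩
    rw [slope_def_field, lt_div_iff₀ (sub_pos.2 hxt)] at hslope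
    nlinarith [ht.2]

theorem HasDerivWithinAt.tendsto_sInf_image_Icc_sub_div {f : ℝ → ℝ} {a x : ℝ}
    (hf : HasDerivWithinAt f a (Ici x) x) :
    Tendsto (fun s => (sInf (f '' Icc x s) - f x) / (s - x)) (𝓝[>] x) (𝓝 (min 0 a)) := by
  have lower : ∀ b < min 0 a, ∀ᶠ s in 𝓝[>] x,
      BddBelow (f '' Icc x s) ∧ b ≤ (sInf (f '' Icc x s) - f x) / (s - x) := by
    intro b hb
    filter_upwards [hf.eventually_forall_Icc_mul_lt_sub (hb.trans_le (min_le_left _ _))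
      (hb.trans_le (min_le_right _ _)), self_mem_nhdsWithin] with s hs (hxs : x < s)
    have hbound : ∀ y ∈ f '' Icc x s, f x + b * (s - x) ≤ y := by
      rintro _ ⟨t, ht, rfl⟩
      linarith [hs t ht]
    refine ⟨⟨_, hbound⟩, ?_⟩
    rw [le_div_iff₀ (sub_pos.2 hxs)]
    linarith [le_csInf ((nonempty_Icc.2 hxs.le).image f) hbound]
  have hslope : Tendsto (fun s => min 0 (slope f x s)) (𝓝[>] x) (𝓝 (min 0 a)) :=
    tendsto_const_nhds.min
      ((hasDerivWithinAt_iff_tendsto_slope' (s := Ioi x) (lt_irrefl x)).1 hf.Ioi_of_Ici)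
  refine tendsto_order.2 ⟨fun b hb => ?_, fun c hc => ?_⟩
  · obtain ⟨b', hbb', hb'⟩ := exists_between hb
    filter_upwards [lower b' hb'] with s hs using hbb'.trans_le hs.2
  · filter_upwards [lower (min 0 a - 1) (sub_one_lt _), self_mem_nhdsWithin,
      hslope.eventually (gt_mem_nhds hc)] with s ⟨hbdd, _⟩ (hxs : x < s) hlt
    refine lt_of_le_of_lt (le_min ?_ ?_) hlt
    · exact div_nonpos_of_nonpos_of_nonneg
        (sub_nonpos.2 (csInf_le hbdd (mem_image_of_mem f (left_mem_Icc.2 hxs.le))))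
        (sub_nonneg.2 hxs.le)
    · rw [slope_def_field]
      gcongr
      exact csInf_le hbdd (mem_image_of_mem f (right_mem_Icc.2 hxs.le))

theorem advantage_limit_boundary_case_general
    (lam ε : ℝ) (hε : 0 < ε)
    (φ ψ : ℝ → ℝ) (φ' ψ' : ℝ)
    (hφ : ContinuousOn φ (Set.Icc 0 ε))
    (hφ' : HasDerivWithinAt φ φ' (Set.Ici 0) 0)
    (hψ' : HasDerivWithinAt ψ ψ' (Set.Ici 0) 0)
    (hle : ∀ t ∈ Set.Icc 0 ε, ψ t ≤ φ t)
    (h0 : ψ 0 = φ 0)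
    (J : ℝ → ℝ)
    (hJ : ∀ t, J t = (∫ τ in (0:ℝ)..t, lam * Real.exp (-(lam * τ)) * φ τ)
      + Real.exp (-(lam * t)) * φ t)
    (Q : ℝ → ℝ)
    (hQ : ∀ s, Q s = min (sInf (J '' Set.Icc 0 s))
      ((∫ τ in (0:ℝ)..s, lam * Real.exp (-(lam * τ)) * φ τ)
        + Real.exp (-(lam * s)) * ψ s)) :
    Filter.Tendsto (fun s : ℝ => (Q s - ψ 0) / s)
      (nhdsWithin 0 (Set.Ioi 0)) (nhds (min 0 ψ')) := by
  have hJ_eq : J = discountedReturn lam φ φ := funext hJ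
  have hJ0 : J 0 = ψ 0 := by rw [hJ_eq, discountedReturn_zero, h0]
  have hJ' : HasDerivWithinAt J φ' (Ici 0) 0 :=
    hJ_eq ▸ hasDerivWithinAt_discountedReturn hε hφ hφ' rfl
  have hG' : HasDerivWithinAt (discountedReturn lam φ ψ) ψ' (Ici 0) 0 :=
    hasDerivWithinAt_discountedReturn hε hφ hψ' h0
  have hψφ : ψ' ≤ φ' := hψ'.le_of_eventually_le hφ'
    (by filter_upwards [Ioo_mem_nhdsGT hε] with t ht using hle t (Ioo_subset_Icc_self ht)) h0
  have hG_slope :=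
    (hasDerivWithinAt_iff_tendsto_slope' (s := Ioi 0) (lt_irrefl 0)).1 hG'.Ioi_of_Ici
  rw [← min_eq_right hψφ, ← min_assoc]
  refine (hJ'.tendsto_sInf_image_Icc_sub_div.min hG_slope).congr' ?_
  filter_upwards [self_mem_nhdsWithin] with s (hs : 0 < s)
  rw [slope_def_field, hJ0, discountedReturn_zero, sub_zero, min_div_div_right hs.le,
    min_sub_sub_right, hQ]
  rfl

/-- **Advantage computation in the case V^λ(x) = c(x) (trajectory-wise form).**
Let `λ ≥ 0` and `φ ψ : [0,∞) → ℝ` be continuous on some `[0,ε]` (`ε > 0`) and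
right-differentiable at `0` with right derivatives `φ'(0)`, `ψ'(0)`; suppose
`ψ(t) ≤ φ(t)` on `[0,ε]` and `ψ(0) = φ(0)`. With
`J_λ(t) = ∫₀ᵗ λ·e^(−λτ)·φ(τ) dτ + e^(−λt)·φ(t)` and
`Q^λ_s = min { inf_{t ∈ [0,s]} J_λ(t), ∫₀ˢ λ·e^(−λτ)·φ(τ) dτ + e^(−λs)·ψ(s) }`,
we have `lim_{s → 0⁺} (Q^λ_s − ψ(0)) / s = min {0, ψ'(0)}`. -/
theorem advantage_limit_boundary_case
    (lam ε : ℝ) (hlam : 0 ≤ lam) (hε : 0 < ε)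
    (φ ψ : ℝ → ℝ) (φ' ψ' : ℝ)
    (hφ : ContinuousOn φ (Set.Icc 0 ε))
    (hψc : ContinuousOn ψ (Set.Icc 0 ε))
    (hφ' : HasDerivWithinAt φ φ' (Set.Ici 0) 0)
    (hψ' : HasDerivWithinAt ψ ψ' (Set.Ici 0) 0)
    (hle : ∀ t ∈ Set.Icc 0 ε, ψ t ≤ φ t)
    (h0 : ψ 0 = φ 0)
    (J : ℝ → ℝ)
    (hJ : ∀ t, J t = (∫ τ in (0:ℝ)..t, lam * Real.exp (-(lam * τ)) * φ τ)
      + Real.exp (-(lam * t)) * φ t)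
    (Q : ℝ → ℝ)
    (hQ : ∀ s, Q s = min (sInf (J '' Set.Icc 0 s))
      ((∫ τ in (0:ℝ)..s, lam * Real.exp (-(lam * τ)) * φ τ)
        + Real.exp (-(lam * s)) * ψ s)) :
    Filter.Tendsto (fun s : ℝ => (Q s - ψ 0) / s)
      (nhdsWithin 0 (Set.Ioi 0)) (nhds (min 0 ψ')) :=
  advantage_limit_boundary_case_general lam ε hε φ ψ φ' ψ' hφ hφ' hψ' hle h0 J hJ Q hQ
end
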